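/- In every weighted congestion game with resource-specific priority lists and cost functions that are polynomials of degree at most d with nonnegative coefficients, the price of anarchy with respect to the sum of weighted costs is at most φ^{d+1}, where φ is the unique positive solution of x^{d+1} = (d+1)(x+1)^d. -/
import Mathlib


open Finset


lemma key_scalar (k : ℕ) (ψ t : ℝ) (hψ : 0 < ψ) (ht : 0 ≤ t) :
    (k+1:ℝ) * (1+t)^k ≤
      ((k+1:ℝ)*(1+ψ)^k - (k*((1+ψ)/ψ)^k/(1+ψ)) * ψ^(k+1))
        + (k*((1+ψ)/ψ)^k/(1+ψ)) * t^(k+1) := by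
  have h1ψ : (0:ℝ) < 1 + ψ := by linarith
  set μ : ℝ := k*((1+ψ)/ψ)^k/(1+ψ) with hμ
  -- suffices the "secant" comparison
  have key : (k+1:ℝ) * ((1+t)^k - (1+ψ)^k) ≤ μ * (t^(k+1) - ψ^(k+1)) := by
    have h1 : t^(k+1) - ψ^(k+1) = (∑ i ∈ range (k+1), t^i * ψ^(k+1-1-i)) * (t - ψ) :=
      (geom_sum₂_mul t ψ (k+1)).symm
    have h2 : (1+t)^k - (1+ψ)^k = (∑ i ∈ range k, (1+t)^i * (1+ψ)^(k-1-i)) * ((1+t) - (1+ψ)) :=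
      (geom_sum₂_mul (1+t) (1+ψ) k).symm
    set r : ℝ := t/ψ with hr
    set q : ℝ := (1+t)/(1+ψ) with hq
    have hr0 : 0 ≤ r := by positivity
    have hq0 : 0 ≤ q := by positivity
    have hA : μ * (∑ i ∈ range (k+1), t^i * ψ^(k+1-1-i))
        = (k*(1+ψ)^k/(1+ψ)) * ∑ i ∈ range (k+1), r^i := by
      rw [mul_sum, mul_sum]
      apply Finset.sum_congr rfl
      intro i hi
      rw [mem_range] at hi
      have hik : k + 1 - 1 - i = k - i := by omega
      have : ψ^(k-i) = ψ^k / ψ^i := by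
        rw [eq_div_iff (by positivity), ← pow_add]
        congr 1; omega
      rw [hik, this, hμ, hr, div_pow, div_pow]
      field_simp
    have hB : (k+1:ℝ) * (∑ i ∈ range k, (1+t)^i * (1+ψ)^(k-1-i))
        = ((k+1)*(1+ψ)^k/(1+ψ)) * ∑ i ∈ range k, q^i := by
      rw [mul_sum, mul_sum]
      apply Finset.sum_congr rfl
      intro i hi
      rw [mem_range] at hi
      have : (1+ψ)^(k-1-i) = (1+ψ)^k / (1+ψ)^(i+1) := by
        rw [eq_div_iff (by positivity), ← pow_add]
        congr 1; omega
      rw [this, hq, div_pow]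
      field_simp
      ring
    rcases le_total ψ t with hc | hc
    · -- t ≥ ψ : A ≥ B, multiply by t - ψ ≥ 0
      have hr1 : 1 ≤ r := (one_le_div hψ).mpr hc
      have hqr : q ≤ r := by
        rw [hq, hr, div_le_div_iff₀ h1ψ hψ]
        nlinarith
      have hsum1 : ∑ i ∈ range k, q^i ≤ ∑ i ∈ range k, r^i :=
        Finset.sum_le_sum (fun i _ => pow_le_pow_left₀ hq0 hqr i)
      have hsum2 : ∑ i ∈ range k, r^i ≤ k * r^k := by
        calc ∑ i ∈ range k, r^i ≤ ∑ i ∈ range k, r^k :=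
              Finset.sum_le_sum (fun i hi => pow_le_pow_right₀ hr1 (mem_range.mp hi).le)
          _ = k * r^k := by rw [Finset.sum_const, card_range, nsmul_eq_mul]
      have hAB : (k+1:ℝ) * (∑ i ∈ range k, (1+t)^i * (1+ψ)^(k-1-i))
          ≤ μ * (∑ i ∈ range (k+1), t^i * ψ^(k+1-1-i)) := by
        rw [hA, hB]
        have hc0 : (0:ℝ) < (1+ψ)^k/(1+ψ) := by positivity
        rw [Finset.sum_range_succ]
        have : ((k:ℝ)+1) * ∑ i ∈ range k, q^i ≤ (k:ℝ) * (∑ i ∈ range k, r^i + r^k) := by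
          nlinarith
        calc (k+1:ℝ)*(1+ψ)^k/(1+ψ) * ∑ i ∈ range k, q^i
            = ((1+ψ)^k/(1+ψ)) * (((k:ℝ)+1) * ∑ i ∈ range k, q^i) := by ring
          _ ≤ ((1+ψ)^k/(1+ψ)) * ((k:ℝ) * (∑ i ∈ range k, r^i + r^k)) :=
              mul_le_mul_of_nonneg_left this hc0.le
          _ = (k:ℝ)*(1+ψ)^k/(1+ψ) * (∑ i ∈ range k, r^i + r^k) := by ring
      rw [h1, h2]
      have := mul_le_mul_of_nonneg_right hAB (sub_nonneg.mpr hc)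
      calc (k+1:ℝ) * ((∑ i ∈ range k, (1+t)^i * (1+ψ)^(k-1-i)) * ((1+t) - (1+ψ)))
          = ((k+1:ℝ) * (∑ i ∈ range k, (1+t)^i * (1+ψ)^(k-1-i))) * (t - ψ) := by ring
        _ ≤ (μ * (∑ i ∈ range (k+1), t^i * ψ^(k+1-1-i))) * (t - ψ) := this
        _ = μ * ((∑ i ∈ range (k+1), t^i * ψ^(k+1-1-i)) * (t - ψ)) := by ring
    · -- t ≤ ψ : A ≤ B, multiply by t - ψ ≤ 0
      have hr1 : r ≤ 1 := (div_le_one hψ).mpr hc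
      have hqr : r ≤ q := by
        rw [hq, hr, div_le_div_iff₀ hψ h1ψ]
        nlinarith
      have hsum1 : ∑ i ∈ range k, r^i ≤ ∑ i ∈ range k, q^i :=
        Finset.sum_le_sum (fun i _ => pow_le_pow_left₀ hr0 hqr i)
      have hsum2 : (k:ℝ) * r^k ≤ ∑ i ∈ range k, r^i := by
        calc (k:ℝ) * r^k = ∑ i ∈ range k, r^k := by rw [Finset.sum_const, card_range, nsmul_eq_mul]
          _ ≤ ∑ i ∈ range k, r^i :=
              Finset.sum_le_sum (fun i hi => pow_le_pow_of_le_one hr0 hr1 (mem_range.mp hi).le)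
      have hAB : μ * (∑ i ∈ range (k+1), t^i * ψ^(k+1-1-i))
          ≤ (k+1:ℝ) * (∑ i ∈ range k, (1+t)^i * (1+ψ)^(k-1-i)) := by
        rw [hA, hB]
        have hc0 : (0:ℝ) < (1+ψ)^k/(1+ψ) := by positivity
        rw [Finset.sum_range_succ]
        have : (k:ℝ) * (∑ i ∈ range k, r^i + r^k) ≤ ((k:ℝ)+1) * ∑ i ∈ range k, q^i := by
          nlinarith
        calc (k:ℝ)*(1+ψ)^k/(1+ψ) * (∑ i ∈ range k, r^i + r^k)
            = ((1+ψ)^k/(1+ψ)) * ((k:ℝ) * (∑ i ∈ range k, r^i + r^k)) := by ring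
          _ ≤ ((1+ψ)^k/(1+ψ)) * (((k:ℝ)+1) * ∑ i ∈ range k, q^i) :=
              mul_le_mul_of_nonneg_left this hc0.le
          _ = (k+1:ℝ)*(1+ψ)^k/(1+ψ) * ∑ i ∈ range k, q^i := by ring
      rw [h1, h2]
      have := mul_le_mul_of_nonpos_right hAB (sub_nonpos.mpr hc)
      calc (k+1:ℝ) * ((∑ i ∈ range k, (1+t)^i * (1+ψ)^(k-1-i)) * ((1+t) - (1+ψ)))
          = ((k+1:ℝ) * (∑ i ∈ range k, (1+t)^i * (1+ψ)^(k-1-i))) * (t - ψ) := by ring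
        _ ≤ (μ * (∑ i ∈ range (k+1), t^i * ψ^(k+1-1-i))) * (t - ψ) := this
        _ = μ * ((∑ i ∈ range (k+1), t^i * ψ^(k+1-1-i)) * (t - ψ)) := by ring
  linarith

lemma keyB (d k : ℕ) (hk : k ≤ d) (ψ x y : ℝ) (hψ : 0 < ψ) (hx : 0 ≤ x) (hy : 0 ≤ y) :
    ((k:ℝ)+1)*y*(x+y)^k ≤
      (d*((1+ψ)/ψ)^d/(1+ψ)) * x^(k+1) + ((1+ψ)^d*(d+1+ψ)/(1+ψ)) * y^(k+1) := by
  have h1ψ : (0:ℝ) < 1 + ψ := by linarith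
  have hρ : (1:ℝ) ≤ (1+ψ)/ψ := by rw [le_div_iff₀ hψ]; linarith
  have hμk : (k:ℝ)*((1+ψ)/ψ)^k/(1+ψ) ≤ d*((1+ψ)/ψ)^d/(1+ψ) := by
    gcongr <;> first
      | positivity
      | exact hρ
      | exact_mod_cast hk
      | exact pow_le_pow_right₀ hρ hk
  have hlamid : (k+1:ℝ)*(1+ψ)^k - ((k:ℝ)*((1+ψ)/ψ)^k/(1+ψ)) * ψ^(k+1)
      = (1+ψ)^k*(k+1+ψ)/(1+ψ) := by
    rw [div_pow]
    field_simp
    ring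
  have hlamk : (1+ψ)^k*((k:ℝ)+1+ψ)/(1+ψ) ≤ (1+ψ)^d*((d:ℝ)+1+ψ)/(1+ψ) := by
    have hkd : (k:ℝ) ≤ d := Nat.cast_le.mpr hk
    gcongr <;> first
      | positivity
      | linarith
      | exact pow_le_pow_right₀ (by linarith) hk
  rcases eq_or_lt_of_le hy with h0 | hy0
  · rw [← h0]
    have : ((k:ℝ)+1)*(0:ℝ)*(x+0)^k = 0 := by ring
    rw [this]
    have : ((0:ℝ))^(k+1) = 0 := by simp
    rw [this, mul_zero, add_zero]
    positivity
  · have hyne : y ≠ 0 := ne_of_gt hy0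
    have h := key_scalar k ψ (x/y) hψ (by positivity)
    have h2 := mul_le_mul_of_nonneg_right h (pow_pos hy0 (k+1)).le
    have e1 : ((k:ℝ)+1) * (1+x/y)^k * y^(k+1) = ((k:ℝ)+1)*y*(x+y)^k := by
      rw [show (1+x/y) = (x+y)/y by field_simp; ring, div_pow, pow_succ]
      field_simp
    have e2 : (x/y)^(k+1)*y^(k+1) = x^(k+1) := by
      rw [div_pow]; field_simp
    calc ((k:ℝ)+1)*y*(x+y)^k = ((k:ℝ)+1) * (1+x/y)^k * y^(k+1) := e1.symm
      _ ≤ (((k+1:ℝ)*(1+ψ)^k - ((k:ℝ)*((1+ψ)/ψ)^k/(1+ψ)) * ψ^(k+1))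
            + ((k:ℝ)*((1+ψ)/ψ)^k/(1+ψ)) * (x/y)^(k+1)) * y^(k+1) := h2
      _ = ((k:ℝ)*((1+ψ)/ψ)^k/(1+ψ)) * ((x/y)^(k+1)*y^(k+1))
            + ((k+1:ℝ)*(1+ψ)^k - ((k:ℝ)*((1+ψ)/ψ)^k/(1+ψ)) * ψ^(k+1)) * y^(k+1) := by ring
      _ = ((k:ℝ)*((1+ψ)/ψ)^k/(1+ψ)) * x^(k+1) + ((1+ψ)^k*((k:ℝ)+1+ψ)/(1+ψ)) * y^(k+1) := by
            rw [e2, hlamid]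
      _ ≤ (d*((1+ψ)/ψ)^d/(1+ψ)) * x^(k+1) + ((1+ψ)^d*(d+1+ψ)/(1+ψ)) * y^(k+1) := by
            have t1 := mul_le_mul_of_nonneg_right hμk (pow_nonneg hx (k+1))
            have t2 := mul_le_mul_of_nonneg_right hlamk (pow_nonneg hy (k+1))
            linarith

lemma prefix_bound {ι : Type*} [DecidableEq ι] (k : ℕ) (p : ι → ℕ) (w : ι → ℝ) :
    ∀ (m : ℕ) (S : Finset ι), S.card = m → (∀ i ∈ S, 0 ≤ w i) →
    (∀ i ∈ S, ∀ j ∈ S, p i = p j → i = j) →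
    (∑ i ∈ S, w i)^(k+1) ≤
      (k+1) * ∑ i ∈ S, w i * (∑ i' ∈ S.filter (fun i' => p i' ≤ p i), w i')^k := by
  intro m
  induction m with
  | zero =>
    intro S hS _ _
    rw [Finset.card_eq_zero] at hS
    subst hS
    simp
  | succ m ih =>
    intro S hS hw hinj
    have hne : S.Nonempty := by
      rw [← Finset.card_pos, hS]; omega
    obtain ⟨i₀, hi₀S, hi₀max⟩ := S.exists_max_image p hne
    set T := S.erase i₀ with hT
    have hTcard : T.card = m := by rw [hT, Finset.card_erase_of_mem hi₀S, hS]; omega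
    have hwT : ∀ i ∈ T, 0 ≤ w i := fun i hi => hw i (Finset.mem_of_mem_erase hi)
    have hinjT : ∀ i ∈ T, ∀ j ∈ T, p i = p j → i = j := fun i hi j hj =>
      hinj i (Finset.mem_of_mem_erase hi) j (Finset.mem_of_mem_erase hj)
    have ihT := ih T hTcard hwT hinjT
    set W : ℝ := ∑ i ∈ S, w i with hW
    set v : ℝ := w i₀ with hv
    have hsumT : ∑ i ∈ T, w i = W - v := by
      rw [hT, hW, hv]
      rw [← Finset.add_sum_erase S w hi₀S]
      ring
    have hv0 : 0 ≤ v := hw i₀ hi₀S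
    have hWv : 0 ≤ W - v := by rw [← hsumT]; exact Finset.sum_nonneg hwT
    have hW0 : 0 ≤ W := by linarith
    -- filters agree on T
    have hfilt : ∀ i ∈ T, T.filter (fun i' => p i' ≤ p i) = S.filter (fun i' => p i' ≤ p i) := by
      intro i hi
      rw [hT, Finset.filter_erase]
      apply Finset.erase_eq_of_notMem
      intro hmem
      rw [Finset.mem_filter] at hmem
      have hii₀ : i ≠ i₀ := Finset.ne_of_mem_erase hi
      have : p i ≤ p i₀ := hi₀max i (Finset.mem_of_mem_erase hi)
      have : p i = p i₀ := le_antisymm this hmem.2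
      exact hii₀ (hinj i (Finset.mem_of_mem_erase hi) i₀ hi₀S this)
    -- filter at i₀ is all of S
    have hfull : S.filter (fun i' => p i' ≤ p i₀) = S :=
      Finset.filter_true_of_mem (fun i hi => hi₀max i hi)
    -- split the big sum
    have hsplit : ∑ i ∈ S, w i * (∑ i' ∈ S.filter (fun i' => p i' ≤ p i), w i')^k
        = (∑ i ∈ T, w i * (∑ i' ∈ T.filter (fun i' => p i' ≤ p i), w i')^k) + v * W^k := by
      rw [hT, ← Finset.add_sum_erase S _ hi₀S, hfull]
      rw [add_comm]
      congr 1
      apply Finset.sum_congr rfl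
      intro i hi
      rw [hfilt i hi]
    rw [hsplit, mul_add]
    have step : W^(k+1) ≤ (W-v)^(k+1) + (k+1) * (v * W^k) := by
      have hgeom : W^(k+1) - (W-v)^(k+1)
          = (∑ i ∈ range (k+1), W^i * (W-v)^(k+1-1-i)) * (W - (W-v)) :=
        (geom_sum₂_mul W (W-v) (k+1)).symm
      have hterm : ∑ i ∈ range (k+1), W^i * (W-v)^(k+1-1-i) ≤ (k+1) * W^k := by
        calc ∑ i ∈ range (k+1), W^i * (W-v)^(k+1-1-i)
            ≤ ∑ i ∈ range (k+1), W^k := by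
              apply Finset.sum_le_sum
              intro i hi
              rw [mem_range] at hi
              have h1 : W^i * (W-v)^(k+1-1-i) ≤ W^i * W^(k+1-1-i) := by
                apply mul_le_mul_of_nonneg_left (pow_le_pow_left₀ hWv (by linarith) _)
                  (pow_nonneg hW0 i)
              have h2 : W^i * W^(k+1-1-i) = W^k := by
                rw [← pow_add]; congr 1; omega
              linarith
          _ = (k+1) * W^k := by rw [Finset.sum_const, card_range, nsmul_eq_mul]; norm_num
      have h3 : W - (W - v) = v := by ring
      rw [h3] at hgeom
      nlinarith [mul_le_mul_of_nonneg_right hterm hv0]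
    calc W^(k+1) ≤ (W-v)^(k+1) + (k+1) * (v * W^k) := step
      _ ≤ (↑(k+1):ℝ) * ∑ i ∈ T, w i * (∑ i' ∈ T.filter (fun i' => p i' ≤ p i), w i')^k
            + (k+1) * (v * W^k) := by
          rw [hsumT] at ihT
          push_cast at ihT ⊢
          linarith
      _ = (k+1) * ((∑ i ∈ T, w i * (∑ i' ∈ T.filter (fun i' => p i' ≤ p i), w i')^k) + v * W^k)
          - (k+1)*(v*W^k) + (k+1)*(v*W^k) := by push_cast; ring
      _ = _ := by push_cast; ring

lemma swap_sum {n : ℕ} {E : Type*} [Fintype E] [DecidableEq E]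
    (s : Fin n → Finset E) (F : Fin n → E → ℝ) :
    ∑ i, ∑ e ∈ s i, F i e = ∑ e, ∑ i ∈ Finset.univ.filter (fun i => e ∈ s i), F i e := by
  have h1 : ∀ i, ∑ e ∈ s i, F i e = ∑ e : E, if e ∈ s i then F i e else 0 := by
    intro i
    rw [Finset.sum_ite_mem, Finset.univ_inter]
  simp_rw [h1, Finset.sum_filter]
  exact Finset.sum_comm


/-- Priority-weighted congestion on resource `e` experienced by player `i`. -/
def wOn {n : ℕ} {E : Type*} [Fintype E] [DecidableEq E]
    (w : Fin n → ℝ) (π : E → Fin n → ℕ)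
    (s : Fin n → Finset E) (i : Fin n) (e : E) : ℝ :=
  ∑ i' ∈ Finset.univ.filter (fun i' => e ∈ s i' ∧ π e i' ≤ π e i), w i'

/-- Cost of player `i` with resource cost functions `c e`. -/
def pCost {n : ℕ} {E : Type*} [Fintype E] [DecidableEq E]
    (w : Fin n → ℝ) (c : E → ℝ → ℝ) (π : E → Fin n → ℕ)
    (s : Fin n → Finset E) (i : Fin n) : ℝ :=
  w i * ∑ e ∈ s i, c e (wOn w π s i e)

/-- In every weighted congestion game with resource-specific priority lists whose
cost functions are polynomials of degree at most d with nonnegative coefficients,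
the price of anarchy (sum of weighted costs) is at most φ^(d+1), where φ > 0 solves
x^(d+1) = (d+1)(x+1)^d. -/
theorem stmt18 {n : ℕ} {E : Type*} [Fintype E] [DecidableEq E] (d : ℕ)
    (w : Fin n → ℝ) (hw : ∀ i, 0 < w i)
    (a : E → ℕ → ℝ) (ha : ∀ e k, 0 ≤ a e k)
    (c : E → ℝ → ℝ) (hcpoly : ∀ e x, c e x = ∑ k ∈ Finset.range (d + 1), a e k * x ^ k)
    (π : E → Fin n → ℕ) (hπ : ∀ e, Function.Injective (π e))
    (φ : ℝ) (hφpos : 0 < φ) (hφ : φ ^ (d + 1) = (d + 1 : ℝ) * (φ + 1) ^ d)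
    (Str : Fin n → Set (Finset E)) (s s' : Fin n → Finset E)
    (hsfeas : ∀ i, s i ∈ Str i) (hs'feas : ∀ i, s' i ∈ Str i)
    (hNE : ∀ (i : Fin n) (t : Finset E), t ∈ Str i →
      pCost w c π s i ≤ pCost w c π (Function.update s i t) i) :
    ∑ i, pCost w c π s i ≤ φ ^ (d + 1) * ∑ i, pCost w c π s' i := by
  have hφ1 : (0:ℝ) < 1 + φ := by linarith
  set μ : ℝ := d*((1+φ)/φ)^d/(1+φ) with hμdef
  set lam : ℝ := (1+φ)^d*(d+1+φ)/(1+φ) with hlamdef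
  have hμ0 : 0 ≤ μ := by positivity
  have hlam0 : 0 ≤ lam := by positivity
  have hφ' : φ ^ (d + 1) = ((d:ℝ) + 1) * (1 + φ) ^ d := by rw [hφ, add_comm φ 1]
  -- lam = φ^(d+1) * (1 - μ)
  have hμmul : φ^(d+1) * μ = ↑d*φ*(1+φ)^d/(1+φ) := by
    rw [hμdef, div_pow, pow_succ]
    field_simp
  have hlamid : lam = φ^(d+1) * (1 - μ) := by
    rw [mul_sub, mul_one, hμmul, hφ', hlamdef]
    field_simp
    ring
  -- μ < 1
  have hμ1 : μ < 1 := by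
    rw [hμdef, div_lt_one hφ1, div_pow, ← mul_div_assoc, div_lt_iff₀ (pow_pos hφpos d)]
    nlinarith [hφ', pow_succ φ d, pow_pos hφpos d, pow_pos hφ1 d]
  -- congestion totals
  set W : E → ℝ := fun e => ∑ i ∈ Finset.univ.filter (fun i => e ∈ s i), w i with hWdef
  set W' : E → ℝ := fun e => ∑ i ∈ Finset.univ.filter (fun i => e ∈ s' i), w i with hW'def
  have hW0 : ∀ e, 0 ≤ W e := fun e => Finset.sum_nonneg (fun i _ => (hw i).le)
  have hW'0 : ∀ e, 0 ≤ W' e := fun e => Finset.sum_nonneg (fun i _ => (hw i).le)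
  -- monotonicity of c
  have hcmono : ∀ (e : E) (x y : ℝ), 0 ≤ x → x ≤ y → c e x ≤ c e y := by
    intro e x y hx hxy
    rw [hcpoly, hcpoly]
    exact Finset.sum_le_sum (fun k _ =>
      mul_le_mul_of_nonneg_left (pow_le_pow_left₀ hx hxy k) (ha e k))
  -- social cost rewriting
  have hC_eq : ∀ (σ : Fin n → Finset E), ∑ i, pCost w c π σ i
      = ∑ e, ∑ k ∈ Finset.range (d+1), a e k *
          ∑ i ∈ Finset.univ.filter (fun i => e ∈ σ i), w i * (wOn w π σ i e)^k := by
    intro σ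
    have h0 : ∀ i, pCost w c π σ i = ∑ e ∈ σ i, w i * c e (wOn w π σ i e) := by
      intro i; rw [pCost, Finset.mul_sum]
    simp_rw [h0]
    rw [swap_sum]
    apply Finset.sum_congr rfl
    intro e _
    simp_rw [hcpoly, Finset.mul_sum]
    rw [Finset.sum_comm]
    apply Finset.sum_congr rfl
    intro k _
    apply Finset.sum_congr rfl
    intro i _
    ring
  -- lower bound on social cost
  have hLB : ∀ (σ : Fin n → Finset E),
      ∑ e, ∑ k ∈ Finset.range (d+1), a e k *
        ((∑ i ∈ Finset.univ.filter (fun i => e ∈ σ i), w i)^(k+1) / ((k:ℝ)+1))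
      ≤ ∑ i, pCost w c π σ i := by
    intro σ
    rw [hC_eq σ]
    apply Finset.sum_le_sum
    intro e _
    apply Finset.sum_le_sum
    intro k _
    apply mul_le_mul_of_nonneg_left ?_ (ha e k)
    rw [div_le_iff₀ (by positivity : (0:ℝ) < (k:ℝ)+1)]
    have hwOn : ∀ i : Fin n, wOn w π σ i e =
        ∑ i' ∈ (Finset.univ.filter (fun i' => e ∈ σ i')).filter
          (fun i' => π e i' ≤ π e i), w i' := by
      intro i
      rw [wOn, Finset.filter_filter]
    have hpre := prefix_bound k (π e) w _ (Finset.univ.filter (fun i => e ∈ σ i)) rfl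
      (fun i _ => (hw i).le) (fun i _ j _ h => hπ e h)
    calc (∑ i ∈ Finset.univ.filter (fun i => e ∈ σ i), w i)^(k+1)
        ≤ (↑k+1) * ∑ i ∈ Finset.univ.filter (fun i => e ∈ σ i), w i *
            (∑ i' ∈ (Finset.univ.filter (fun i' => e ∈ σ i')).filter
              (fun i' => π e i' ≤ π e i), w i')^k := by exact_mod_cast hpre
      _ = (∑ i ∈ Finset.univ.filter (fun i => e ∈ σ i), w i * (wOn w π σ i e)^k) * (↑k+1) := by
          rw [mul_comm]
          congr 1
          apply Finset.sum_congr rfl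
          intro i _
          rw [hwOn i]
  -- Nash upper bound
  have hUB : ∑ i, pCost w c π s i
      ≤ ∑ e, ∑ k ∈ Finset.range (d+1), a e k * (W' e * (W e + W' e)^k) := by
    have step1 : ∀ i, pCost w c π s i ≤ w i * ∑ e ∈ s' i, c e (W e + W' e) := by
      intro i
      refine (hNE i (s' i) (hs'feas i)).trans ?_
      rw [pCost, Function.update_self]
      apply mul_le_mul_of_nonneg_left ?_ (hw i).le
      apply Finset.sum_le_sum
      intro e he
      have hwOn0 : 0 ≤ wOn w π (Function.update s i (s' i)) i e :=
        Finset.sum_nonneg (fun j _ => (hw j).le)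
      have hbound : wOn w π (Function.update s i (s' i)) i e ≤ W e + w i := by
        rw [wOn]
        have hsub : Finset.univ.filter
            (fun i' => e ∈ Function.update s i (s' i) i' ∧ π e i' ≤ π e i)
            ⊆ insert i (Finset.univ.filter (fun i' => e ∈ s i')) := by
          intro j hj
          rw [Finset.mem_filter] at hj
          rcases eq_or_ne j i with h | h
          · rw [h]; exact Finset.mem_insert_self _ _
          · apply Finset.mem_insert_of_mem
            rw [Finset.mem_filter]
            refine ⟨Finset.mem_univ _, ?_⟩
            have := hj.2.1
            rwa [Function.update_of_ne h] at this
        calc ∑ i' ∈ Finset.univ.filter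
              (fun i' => e ∈ Function.update s i (s' i) i' ∧ π e i' ≤ π e i), w i'
            ≤ ∑ j ∈ insert i (Finset.univ.filter (fun i' => e ∈ s i')), w j :=
              Finset.sum_le_sum_of_subset_of_nonneg hsub (fun j _ _ => (hw j).le)
          _ ≤ W e + w i := by
              by_cases hi : i ∈ Finset.univ.filter (fun i' => e ∈ s i')
              · rw [Finset.insert_eq_self.mpr hi]
                have := (hw i).le
                simp only [hWdef]
                linarith
              · rw [Finset.sum_insert hi]
                simp only [hWdef]
                linarith
      have hwi : w i ≤ W' e := by
        apply Finset.single_le_sum (f := w) (fun j _ => (hw j).le)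
        rw [Finset.mem_filter]
        exact ⟨Finset.mem_univ _, he⟩
      calc c e (wOn w π (Function.update s i (s' i)) i e)
          ≤ c e (W e + w i) := hcmono e _ _ hwOn0 hbound
        _ ≤ c e (W e + W' e) := hcmono e _ _ (by linarith [hW0 e, hw i]) (by linarith)
    calc ∑ i, pCost w c π s i ≤ ∑ i, w i * ∑ e ∈ s' i, c e (W e + W' e) :=
          Finset.sum_le_sum (fun i _ => step1 i)
      _ = ∑ i, ∑ e ∈ s' i, w i * c e (W e + W' e) := by
          apply Finset.sum_congr rfl; intro i _; rw [Finset.mul_sum]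
      _ = ∑ e, ∑ i ∈ Finset.univ.filter (fun i => e ∈ s' i), w i * c e (W e + W' e) :=
          swap_sum s' _
      _ = ∑ e, ∑ k ∈ Finset.range (d+1), a e k * (W' e * (W e + W' e)^k) := by
          apply Finset.sum_congr rfl
          intro e _
          rw [← Finset.sum_mul, hcpoly, Finset.mul_sum]
          apply Finset.sum_congr rfl
          intro k _
          simp only [hW'def]
          ring
  -- combine via keyB
  have hmain : ∑ i, pCost w c π s i
      ≤ μ * (∑ i, pCost w c π s i) + lam * (∑ i, pCost w c π s' i) := by
    have hstep : ∑ e, ∑ k ∈ Finset.range (d+1), a e k * (W' e * (W e + W' e)^k)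
        ≤ μ * (∑ e, ∑ k ∈ Finset.range (d+1), a e k * ((W e)^(k+1) / ((k:ℝ)+1)))
          + lam * (∑ e, ∑ k ∈ Finset.range (d+1), a e k * ((W' e)^(k+1) / ((k:ℝ)+1))) := by
      rw [Finset.mul_sum, Finset.mul_sum, ← Finset.sum_add_distrib]
      apply Finset.sum_le_sum
      intro e _
      rw [Finset.mul_sum, Finset.mul_sum, ← Finset.sum_add_distrib]
      apply Finset.sum_le_sum
      intro k hk
      rw [Finset.mem_range] at hk
      have hkd : k ≤ d := by omega
      have hkey := keyB d k hkd φ (W e) (W' e) hφpos (hW0 e) (hW'0 e)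
      have hk1 : (0:ℝ) < (k:ℝ)+1 := by positivity
      rw [← hμdef, ← hlamdef] at hkey
      have : W' e * (W e + W' e)^k
          ≤ μ * ((W e)^(k+1) / ((k:ℝ)+1)) + lam * ((W' e)^(k+1) / ((k:ℝ)+1)) := by
        calc W' e * (W e + W' e)^k
            = (((k:ℝ)+1) * W' e * (W e + W' e)^k) / ((k:ℝ)+1) := by field_simp
          _ ≤ (μ * (W e)^(k+1) + lam * (W' e)^(k+1)) / ((k:ℝ)+1) := by gcongr
          _ = μ * ((W e)^(k+1) / ((k:ℝ)+1)) + lam * ((W' e)^(k+1) / ((k:ℝ)+1)) := by ring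
      calc a e k * (W' e * (W e + W' e)^k)
          ≤ a e k * (μ * ((W e)^(k+1) / ((k:ℝ)+1)) + lam * ((W' e)^(k+1) / ((k:ℝ)+1))) :=
            mul_le_mul_of_nonneg_left this (ha e k)
        _ = μ * (a e k * ((W e)^(k+1) / ((k:ℝ)+1))) + lam * (a e k * ((W' e)^(k+1) / ((k:ℝ)+1))) := by ring
    have hL := hLB s
    have hL' := hLB s'
    simp only [hWdef, hW'def] at hstep
    calc ∑ i, pCost w c π s i
        ≤ ∑ e, ∑ k ∈ Finset.range (d+1), a e k * (W' e * (W e + W' e)^k) := hUB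
      _ ≤ μ * (∑ e, ∑ k ∈ Finset.range (d+1), a e k *
              ((∑ i ∈ Finset.univ.filter (fun i => e ∈ s i), w i)^(k+1) / ((k:ℝ)+1)))
          + lam * (∑ e, ∑ k ∈ Finset.range (d+1), a e k *
              ((∑ i ∈ Finset.univ.filter (fun i => e ∈ s' i), w i)^(k+1) / ((k:ℝ)+1))) := hstep
      _ ≤ μ * (∑ i, pCost w c π s i) + lam * (∑ i, pCost w c π s' i) := by
          have := mul_le_mul_of_nonneg_left hL hμ0
          have := mul_le_mul_of_nonneg_left hL' hlam0
          linarith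
  -- finish
  rw [hlamid] at hmain
  nlinarith [hmain, hμ1]
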